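/- arXiv:1711.01934 — 7 statements merged into one kernel-verified Lean document; each statement's English description precedes it below -/
import Mathlib

section
/- Let y : ℝ → ℝ be twice differentiable with y''(t) = -y(t) for all t. Then the function I₄(t) = -(1/2)·(y'(t))²·cos(2t) - y(t)·y'(t)·sin(2t) + (1/2)·(y(t))²·cos(2t) is constant, i.e., I₄(t) = I₄(0) for all t ∈ ℝ. -/
/-! The solution with data `(y 0, y' 0)` is the rotation `y t = y 0 cos t + y' 0 sin t`, so rotating back
by `-t` gives two first integrals, `y cos t - y' sin t = y 0` and `y sin t + y' cos t = y' 0`.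
The double-angle formulas show that `I₄` is half the difference of their squares. -/

open Real

theorem eq_of_forall_hasDerivAt_zero {f : ℝ → ℝ} (hf : ∀ t, HasDerivAt f 0 t) (t : ℝ) :
    f t = f 0 :=
  is_const_of_deriv_eq_zero (fun s ↦ (hf s).differentiableAt) (fun s ↦ (hf s).deriv) t 0

section HarmonicOscillator

variable {y y' : ℝ → ℝ}

theorem harmonic_mul_cos_sub_mul_sin (hy : ∀ t, HasDerivAt y (y' t) t)
    (hy' : ∀ t, HasDerivAt y' (-(y t)) t) (t : ℝ) : y t * cos t - y' t * sin t = y 0 := by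
  have hderiv : ∀ s, HasDerivAt (fun s ↦ y s * cos s - y' s * sin s) 0 s := fun s ↦ by
    refine (((hy s).mul (hasDerivAt_cos s)).sub ((hy' s).mul (hasDerivAt_sin s))).congr_deriv ?_
    ring
  simpa using eq_of_forall_hasDerivAt_zero hderiv t

theorem harmonic_mul_sin_add_mul_cos (hy : ∀ t, HasDerivAt y (y' t) t)
    (hy' : ∀ t, HasDerivAt y' (-(y t)) t) (t : ℝ) : y t * sin t + y' t * cos t = y' 0 := by
  have hderiv : ∀ s, HasDerivAt (fun s ↦ y s * sin s + y' s * cos s) 0 s := fun s ↦ by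
    refine (((hy s).mul (hasDerivAt_sin s)).add ((hy' s).mul (hasDerivAt_cos s))).congr_deriv ?_
    ring
  simpa using eq_of_forall_hasDerivAt_zero hderiv t

end HarmonicOscillator

theorem first_integral_eq_half_sq_sub_sq (a v t : ℝ) :
    -(1/2) * v^2 * cos (2*t) - a * v * sin (2*t) + (1/2) * a^2 * cos (2*t) =
      ((a * cos t - v * sin t)^2 - (a * sin t + v * cos t)^2) / 2 := by
  rw [cos_two_mul, sin_two_mul]
  linear_combination (1/2) * (a^2 - v^2) * sin_sq_add_cos_sq t

theorem harmonic_first_integral_3 (y y' : ℝ → ℝ)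
    (hy : ∀ t, HasDerivAt y (y' t) t)
    (hy' : ∀ t, HasDerivAt y' (-(y t)) t) :
    ∀ t : ℝ, -(1/2) * (y' t)^2 * Real.cos (2*t) - y t * y' t * Real.sin (2*t) + (1/2) * (y t)^2 * Real.cos (2*t) = -(1/2) * (y' 0)^2 * Real.cos (2*0) - y 0 * y' 0 * Real.sin (2*0) + (1/2) * (y 0)^2 * Real.cos (2*0) := by
  intro t
  rw [first_integral_eq_half_sq_sub_sq (y t), first_integral_eq_half_sq_sub_sq (y 0),
    harmonic_mul_cos_sub_mul_sin hy hy', harmonic_mul_sin_add_mul_cos hy hy',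
    harmonic_mul_cos_sub_mul_sin hy hy', harmonic_mul_sin_add_mul_cos hy hy']
end

section
/- Let f, g : ℝ → ℝ be twice differentiable with f''(t) = -f(t) and g''(t) = -g(t) for all t. Then the function I₁,₁(t) = ((f'(t))² - (g'(t))² - (f(t))² + (g(t))²)·sin(2t) - 2·(f(t)·f'(t) - g(t)·g'(t))·cos(2t) is constant, i.e., I₁,₁(t) = I₁,₁(0) for all t ∈ ℝ. -/
/-!
For a single oscillator `u'' = -u` the quantity `(u' - i u)² e^{2it}` is constant: its derivative is
`2 (u' - i u) e^{2it} ((-u - i u') + i (u' - i u)) = 0`. Its imaginary part is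
`oscillatorIntegral u u'`, and the integral of the theorem is the difference of the ones of
`f` and of `g`.
-/

open Real

noncomputable def oscillatorIntegral (u u' : ℝ → ℝ) (t : ℝ) : ℝ :=
  (u' t ^ 2 - u t ^ 2) * sin (2 * t) - 2 * (u t * u' t) * cos (2 * t)

section

variable {u u' : ℝ → ℝ}

theorem hasDerivAt_oscillatorIntegral (hu : ∀ t, HasDerivAt u (u' t) t)
    (hu' : ∀ t, HasDerivAt u' (-u t) t) (t : ℝ) :
    HasDerivAt (oscillatorIntegral u u') 0 t := by
  have hsin : HasDerivAt (fun t => sin (2 * t)) (cos (2 * t) * 2) t :=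
    ((hasDerivAt_id t).const_mul 2).sin.congr_deriv (by simp)
  have hcos : HasDerivAt (fun t => cos (2 * t)) (-sin (2 * t) * 2) t :=
    ((hasDerivAt_id t).const_mul 2).cos.congr_deriv (by simp)
  have hsq := ((hu' t).pow 2).sub ((hu t).pow 2)
  have hprod := ((hu t).mul (hu' t)).const_mul 2
  exact ((hsq.mul hsin).sub (hprod.mul hcos)).congr_deriv (by simp only [Pi.mul_apply, Pi.sub_apply, Pi.pow_apply, Nat.cast_ofNat]; ring)

theorem oscillatorIntegral_eq (hu : ∀ t, HasDerivAt u (u' t) t)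
    (hu' : ∀ t, HasDerivAt u' (-u t) t) (t s : ℝ) :
    oscillatorIntegral u u' t = oscillatorIntegral u u' s :=
  is_const_of_deriv_eq_zero
    (fun x => (hasDerivAt_oscillatorIntegral hu hu' x).differentiableAt)
    (fun x => (hasDerivAt_oscillatorIntegral hu hu' x).deriv) t s

end

theorem uncoupled_oscillators_first_integral_5 (f f' g g' : ℝ → ℝ)
    (hf : ∀ t, HasDerivAt f (f' t) t)
    (hf' : ∀ t, HasDerivAt f' (-(f t)) t)
    (hg : ∀ t, HasDerivAt g (g' t) t)
    (hg' : ∀ t, HasDerivAt g' (-(g t)) t) :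
    ∀ t : ℝ, ((f' t)^2 - (g' t)^2 - (f t)^2 + (g t)^2) * Real.sin (2*t) - 2 * (f t * f' t - g t * g' t) * Real.cos (2*t) = ((f' 0)^2 - (g' 0)^2 - (f 0)^2 + (g 0)^2) * Real.sin (2*0) - 2 * (f 0 * f' 0 - g 0 * g' 0) * Real.cos (2*0) := by
  intro t
  have hfI := oscillatorIntegral_eq hf hf' t 0
  have hgI := oscillatorIntegral_eq hg hg' t 0
  unfold oscillatorIntegral at hfI hgI
  linear_combination hfI - hgI
end

section
/- Let f, g : ℝ → ℝ be twice differentiable with f''(t) = -f(t) and g''(t) = -g(t) for all t. Then the function I₁,₂(t) = 2·(f'(t)·g'(t) - f(t)·g(t))·sin(2t) - 2·(f(t)·g'(t) + f'(t)·g(t))·cos(2t) is constant, i.e., I₁,₂(t) = I₁,₂(0) for all t ∈ ℝ. -/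
/-!
Both `u = f' + i f` and `v = g' + i g` solve `u' = i u`, so `e^{-2it} u v` is constant. Its
imaginary part is `(f' g + f g') cos 2t - (f' g' - f g) sin 2t = -I₁,₂(t) / 2`.
-/

open Complex

theorem mul_exp_neg_mul_eq_of_hasDerivAt {u : ℝ → ℂ} {c : ℂ}
    (hu : ∀ t, HasDerivAt u (c * u t) t) (t : ℝ) :
    u t * exp (-(c * t)) = u 0 := by
  have hderiv : ∀ s : ℝ, HasDerivAt (fun s : ℝ => u s * exp (-(c * s))) 0 s := by
    intro s
    have hexp : HasDerivAt (fun s : ℝ => exp (-(c * s))) (exp (-(c * s)) * -c) s := by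
      simpa using ((hasDerivAt_id (s : ℂ)).const_mul c).neg.cexp.comp_ofReal
    exact ((hu s).mul hexp).congr_deriv (by ring)
  simpa using is_const_of_deriv_eq_zero (fun s => (hderiv s).differentiableAt)
    (fun s => (hderiv s).deriv) t 0

theorem hasDerivAt_oscillator_phase {f f' : ℝ → ℝ}
    (hf : ∀ t, HasDerivAt f (f' t) t) (hf' : ∀ t, HasDerivAt f' (-(f t)) t) (t : ℝ) :
    HasDerivAt (fun t => (f' t : ℂ) + f t * I) (I * (f' t + f t * I)) t :=
  ((hf' t).ofReal_comp.add ((hf t).ofReal_comp.mul_const I)).congr_deriv <| by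
    push_cast
    linear_combination -(f t : ℂ) * I_sq

theorem im_mul_exp_neg_two_mul_I (z : ℂ) (x : ℝ) :
    (z * exp (-(2 * I * x))).im = z.im * Real.cos (2 * x) - z.re * Real.sin (2 * x) := by
  simp only [mul_im, exp_re, exp_im, neg_re, neg_im, mul_re, re_ofNat, im_ofNat, I_re, I_im,
    ofReal_re, ofReal_im, mul_zero, zero_mul, mul_one, one_mul, sub_self, neg_zero, add_zero,
    zero_add, Real.exp_zero, Real.sin_neg, Real.cos_neg]
  ring

theorem uncoupled_oscillators_first_integral_6 (f f' g g' : ℝ → ℝ)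
    (hf : ∀ t, HasDerivAt f (f' t) t)
    (hf' : ∀ t, HasDerivAt f' (-(f t)) t)
    (hg : ∀ t, HasDerivAt g (g' t) t)
    (hg' : ∀ t, HasDerivAt g' (-(g t)) t) :
    ∀ t : ℝ, 2 * (f' t * g' t - f t * g t) * Real.sin (2*t) - 2 * (f t * g' t + f' t * g t) * Real.cos (2*t) = 2 * (f' 0 * g' 0 - f 0 * g 0) * Real.sin (2*0) - 2 * (f 0 * g' 0 + f' 0 * g 0) * Real.cos (2*0) := by
  intro t
  set w : ℝ → ℂ := fun t => ((f' t : ℂ) + f t * I) * ((g' t : ℂ) + g t * I)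
  have hw : ∀ s, HasDerivAt w (2 * I * w s) s := fun s =>
    ((hasDerivAt_oscillator_phase hf hf' s).mul (hasDerivAt_oscillator_phase hg hg' s)).congr_deriv
      (by ring)
  have hconst := congrArg im (mul_exp_neg_mul_eq_of_hasDerivAt hw t)
  rw [im_mul_exp_neg_two_mul_I] at hconst
  simp only [w, mul_im, mul_re, add_re, add_im, ofReal_re, ofReal_im, I_re, I_im] at hconst
  rw [mul_zero, Real.sin_zero, Real.cos_zero]
  linear_combination -2 * hconst
end

section
/- Let f, g : ℝ → ℝ be twice differentiable with f''(t) = -f(t) and g''(t) = -g(t) for all t. Then the function I₂,₂(t) = 2·(f'(t)·g'(t) - f(t)·g(t))·cos(2t) + 2·(f(t)·g'(t) + f'(t)·g(t))·sin(2t) is constant, i.e., I₂,₂(t) = I₂,₂(0) for all t ∈ ℝ. -/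
/-!
Every solution of `x'' = -x` is `x t = cos t • x 0 + sin t • x' 0`, because
`cos t • x t - sin t • x' t` has zero derivative; applying this to the solution `x'` as well,
the closed forms for `f`, `f'`, `g`, `g'` turn the expression into `2 (f' 0 g' 0 - f 0 g 0)` by the
double-angle formulas and `cos² + sin² = 1`.
-/

namespace HarmonicOscillator

variable {E : Type*} [NormedAddCommGroup E] [NormedSpace ℝ E] {x v : ℝ → E}

theorem cos_smul_sub_sin_smul_eq_apply_zero (hx : ∀ t, HasDerivAt x (v t) t)
    (hv : ∀ t, HasDerivAt v (-x t) t) (t : ℝ) :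
    Real.cos t • x t - Real.sin t • v t = x 0 := by
  have hderiv : ∀ s, HasDerivAt (fun s => Real.cos s • x s - Real.sin s • v s) 0 s := fun s => by
    refine ((Real.hasDerivAt_cos s).smul (hx s)).sub ((Real.hasDerivAt_sin s).smul (hv s))
      |>.congr_deriv ?_
    module
  simpa using is_const_of_deriv_eq_zero (fun s => (hderiv s).differentiableAt)
    (fun s => (hderiv s).deriv) t 0

theorem eq_cos_smul_add_sin_smul (hx : ∀ t, HasDerivAt x (v t) t)
    (hv : ∀ t, HasDerivAt v (-x t) t) (t : ℝ) :
    x t = Real.cos t • x 0 + Real.sin t • v 0 := by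
  have hx₀ := cos_smul_sub_sin_smul_eq_apply_zero hx hv t
  have hv₀ := cos_smul_sub_sin_smul_eq_apply_zero hv (fun s => (hx s).neg) t
  rw [← hx₀, ← hv₀]
  calc x t = (Real.sin t ^ 2 + Real.cos t ^ 2) • x t := by rw [Real.sin_sq_add_cos_sq, one_smul]
    _ = _ := by module

theorem velocity_eq_cos_smul_sub_sin_smul (hx : ∀ t, HasDerivAt x (v t) t)
    (hv : ∀ t, HasDerivAt v (-x t) t) (t : ℝ) :
    v t = Real.cos t • v 0 - Real.sin t • x 0 := by
  simpa [sub_eq_add_neg] using eq_cos_smul_add_sin_smul hv (fun s => (hx s).neg) t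

end HarmonicOscillator

theorem uncoupled_oscillators_first_integral_7 (f f' g g' : ℝ → ℝ)
    (hf : ∀ t, HasDerivAt f (f' t) t)
    (hf' : ∀ t, HasDerivAt f' (-(f t)) t)
    (hg : ∀ t, HasDerivAt g (g' t) t)
    (hg' : ∀ t, HasDerivAt g' (-(g t)) t) :
    ∀ t : ℝ, 2 * (f' t * g' t - f t * g t) * Real.cos (2*t) + 2 * (f t * g' t + f' t * g t) * Real.sin (2*t) = 2 * (f' 0 * g' 0 - f 0 * g 0) * Real.cos (2*0) + 2 * (f 0 * g' 0 + f' 0 * g 0) * Real.sin (2*0) := by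
  intro t
  rw [HarmonicOscillator.eq_cos_smul_add_sin_smul hf hf' t,
    HarmonicOscillator.velocity_eq_cos_smul_sub_sin_smul hf hf' t,
    HarmonicOscillator.eq_cos_smul_add_sin_smul hg hg' t,
    HarmonicOscillator.velocity_eq_cos_smul_sub_sin_smul hg hg' t]
  simp only [smul_eq_mul, mul_zero, Real.cos_zero, Real.sin_zero, Real.cos_two_mul',
    Real.sin_two_mul]
  linear_combination (2 * (f' 0 * g' 0 - f 0 * g 0) * (Real.sin t ^ 2 + Real.cos t ^ 2 + 1))
    * Real.sin_sq_add_cos_sq t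
end

section
/- Let α₁, α₂ ∈ ℝ and let f, g : ℝ → ℝ be twice differentiable with f''(t) = -(α₁² - α₂²)·f(t) + 2α₁α₂·g(t) and g''(t) = -(α₁² - α₂²)·g(t) - 2α₁α₂·f(t) for all t. Then the function I₃,₁(t) = f'(t)·cos(α₁t)·cosh(α₂t) + g'(t)·sin(α₁t)·sinh(α₂t) + (α₁·f(t) - α₂·g(t))·sin(α₁t)·cosh(α₂t) - (α₁·g(t) + α₂·f(t))·cos(α₁t)·sinh(α₂t) is constant, i.e., I₃,₁(t) = I₃,₁(0) for all t ∈ ℝ. -/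
/-!
With `y = f + i g` and `k = α₁ + i α₂` the system reads `y'' = -k² y`, and the expression in the
theorem is the real part of `y'(t) cos(kt) + k y(t) sin(kt)`, whose derivative is
`(y'' + k² y) cos(kt) = 0`.
-/

open Complex

theorem hasDerivAt_cos_const_mul_ofReal (k : ℂ) (t : ℝ) :
    HasDerivAt (fun s : ℝ => cos (k * s)) (-(k * sin (k * t))) t := by
  simpa [mul_comm] using ((hasDerivAt_id (t : ℂ)).const_mul k).ccos.comp_ofReal

theorem hasDerivAt_sin_const_mul_ofReal (k : ℂ) (t : ℝ) :
    HasDerivAt (fun s : ℝ => sin (k * s)) (k * cos (k * t)) t := by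
  simpa [mul_comm] using ((hasDerivAt_id (t : ℂ)).const_mul k).csin.comp_ofReal

theorem cos_smul_deriv_add_sin_smul_eq {E : Type*} [NormedAddCommGroup E] [NormedSpace ℂ E]
    {k : ℂ} {y y' : ℝ → E}
    (hy : ∀ t, HasDerivAt y (y' t) t) (hy' : ∀ t, HasDerivAt y' (-k ^ 2 • y t) t) (t s : ℝ) :
    cos (k * t) • y' t + sin (k * t) • k • y t = cos (k * s) • y' s + sin (k * s) • k • y s := by
  have hJ : ∀ t, HasDerivAt (fun t : ℝ => cos (k * t) • y' t + sin (k * t) • k • y t) 0 t := by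
    intro t
    have h := ((hasDerivAt_cos_const_mul_ofReal k t).smul (hy' t)).add
      ((hasDerivAt_sin_const_mul_ofReal k t).smul ((hy t).const_smul k))
    refine h.congr_deriv ?_
    simp only [Pi.smul_apply, smul_smul]
    module
  exact is_const_of_deriv_eq_zero (fun t => (hJ t).differentiableAt) (fun t => (hJ t).deriv) t s

theorem cos_mul_add_mul_I (a b t : ℝ) :
    cos ((a + b * I) * t)
      = Real.cos (a * t) * Real.cosh (b * t) - Real.sin (a * t) * Real.sinh (b * t) * I := by
  have : (a + b * I) * t = ((a * t : ℝ) : ℂ) + ((b * t : ℝ) : ℂ) * I := by push_cast; ring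
  rw [this, cos_add_mul_I, ofReal_cos, ofReal_cosh, ofReal_sin, ofReal_sinh]

theorem sin_mul_add_mul_I (a b t : ℝ) :
    sin ((a + b * I) * t)
      = Real.sin (a * t) * Real.cosh (b * t) + Real.cos (a * t) * Real.sinh (b * t) * I := by
  have : (a + b * I) * t = ((a * t : ℝ) : ℂ) + ((b * t : ℝ) : ℂ) * I := by push_cast; ring
  rw [this, sin_add_mul_I, ofReal_cos, ofReal_cosh, ofReal_sin, ofReal_sinh]

theorem re_cos_mul_add_sin_mul_mul (a b t : ℝ) (u v : ℂ) :
    (cos ((a + b * I) * t) * v + sin ((a + b * I) * t) * ((a + b * I) * u)).re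
      = v.re * Real.cos (a * t) * Real.cosh (b * t) + v.im * Real.sin (a * t) * Real.sinh (b * t)
        + (a * u.re - b * u.im) * Real.sin (a * t) * Real.cosh (b * t)
        - (a * u.im + b * u.re) * Real.cos (a * t) * Real.sinh (b * t) := by
  rw [cos_mul_add_mul_I, sin_mul_add_mul_I]
  simp only [add_re, sub_re, mul_re, mul_im, add_im, sub_im, ofReal_re, ofReal_im, I_re, I_im]
  ring

theorem coupled_oscillators_first_integral_15 (α₁ α₂ : ℝ) (f f' g g' : ℝ → ℝ)
    (hf : ∀ t, HasDerivAt f (f' t) t)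
    (hf' : ∀ t, HasDerivAt f' (-(α₁^2 - α₂^2) * f t + 2*α₁*α₂ * g t) t)
    (hg : ∀ t, HasDerivAt g (g' t) t)
    (hg' : ∀ t, HasDerivAt g' (-(α₁^2 - α₂^2) * g t - 2*α₁*α₂ * f t) t) :
    ∀ t : ℝ, f' t * Real.cos (α₁*t) * Real.cosh (α₂*t) + g' t * Real.sin (α₁*t) * Real.sinh (α₂*t) + (α₁ * f t - α₂ * g t) * Real.sin (α₁*t) * Real.cosh (α₂*t) - (α₁ * g t + α₂ * f t) * Real.cos (α₁*t) * Real.sinh (α₂*t) = f' 0 * Real.cos (α₁*0) * Real.cosh (α₂*0) + g' 0 * Real.sin (α₁*0) * Real.sinh (α₂*0) + (α₁ * f 0 - α₂ * g 0) * Real.sin (α₁*0) * Real.cosh (α₂*0) - (α₁ * g 0 + α₂ * f 0) * Real.cos (α₁*0) * Real.sinh (α₂*0) := by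
  intro t
  have hy : ∀ t, HasDerivAt (fun t => (f t : ℂ) + g t * I) (f' t + g' t * I) t := fun t =>
    (hf t).ofReal_comp.add ((hg t).ofReal_comp.mul_const I)
  have hy' : ∀ t, HasDerivAt (fun t => (f' t : ℂ) + g' t * I)
      (-(α₁ + α₂ * I) ^ 2 • (f t + g t * I)) t := by
    intro t
    refine ((hf' t).ofReal_comp.add ((hg' t).ofReal_comp.mul_const I)).congr_deriv ?_
    push_cast
    linear_combination (2 * α₁ * α₂ * g t + α₂ ^ 2 * f t + α₂ ^ 2 * g t * I) * I_sq
  have hJ := congrArg re (cos_smul_deriv_add_sin_smul_eq hy hy' t 0)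
  simp only [smul_eq_mul, re_cos_mul_add_sin_mul_mul] at hJ
  simpa using hJ
end

section
/- Let n, s be positive natural numbers, let S be a symmetric n×n real matrix, and let F : ℝⁿ → ℝⁿ satisfy ⟨y, S·F(y)⟩ = 0 for all y ∈ ℝⁿ (so that I(y) = yᵀSy is a quadratic first integral of the ODE y' = F(y)). Let a : Fin s → Fin s → ℝ and b : Fin s → ℝ be Runge–Kutta coefficients satisfying the symplecticity condition bᵢ·aᵢⱼ + bⱼ·aⱼᵢ - bᵢ·bⱼ = 0 for all i, j. Suppose h ∈ ℝ, y₀ ∈ ℝⁿ, and stage values Y : Fin s → ℝⁿ satisfy Yᵢ = y₀ + h·∑ⱼ aᵢⱼ·F(Yⱼ) for every i, and define y₁ = y₀ + h·∑ᵢ bᵢ·F(Yᵢ). Then y₁ᵀ S y₁ = y₀ᵀ S y₀. -/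
/-!
Write `fᵢ = F(Yᵢ)` and `v = ∑ bᵢ fᵢ`, so that `y₁ = y₀ + h v` and, for a symmetric form `B`,
`B(y₁, y₁) = B(y₀, y₀) + 2h B(y₀, v) + h² B(v, v)`. Since `B(Yᵢ, fᵢ) = 0`, the stage equations give
`B(y₀, fᵢ) = -h ∑ⱼ aᵢⱼ B(fⱼ, fᵢ)`, so `2h B(y₀, v) = -h² ∑ᵢⱼ (bᵢaᵢⱼ + bⱼaⱼᵢ) B(fᵢ, fⱼ)`, and the
symplecticity condition turns this into `-h² ∑ᵢⱼ bᵢbⱼ B(fᵢ, fⱼ) = -h² B(v, v)`.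
-/

open Finset

lemma sum_sum_mul_mul_eq_two_mul_of_symplectic {R ι : Type*} [CommRing R] [Fintype ι]
    {a : ι → ι → R} {b : ι → R} (hsymp : ∀ i j, b i * a i j + b j * a j i - b i * b j = 0)
    {q : ι → ι → R} (hq : ∀ i j, q i j = q j i) :
    ∑ i, ∑ j, b i * b j * q i j = 2 * ∑ i, ∑ j, b i * a i j * q j i := by
  have hterm : ∀ i j, b i * b j * q i j = b i * a i j * q j i + b j * a j i * q i j := by
    intro i j
    rw [hq i j, ← add_mul, ← sub_eq_zero.mp (hsymp i j)]
  simp_rw [hterm, sum_add_distrib]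
  rw [sum_comm (f := fun i j => b j * a j i * q i j)]
  ring

namespace LinearMap.BilinForm

variable {R M ι : Type*} [CommRing R] [AddCommGroup M] [Module R M] [Fintype ι]

lemma IsSymm.apply_add_self {B : LinearMap.BilinForm R M} (hB : B.IsSymm) (x y : M) :
    B (x + y) (x + y) = B x x + 2 * B x y + B y y := by
  simp only [map_add, LinearMap.add_apply, hB.eq y x]
  ring

lemma apply_stage_eq_of_apply_self_eq_zero (B : LinearMap.BilinForm R M) {F : M → M}
    (hF : ∀ y, B y (F y) = 0) (a : ι → ι → R) (h : R) (y₀ : M) (Y : ι → M)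
    (hY : ∀ i, Y i = y₀ + h • ∑ j, a i j • F (Y j)) (i : ι) :
    B y₀ (F (Y i)) = -(h * ∑ j, a i j * B (F (Y j)) (F (Y i))) := by
  have hi := hF (Y i)
  nth_rewrite 1 [hY i] at hi
  simp only [map_add, map_smul, map_sum, LinearMap.add_apply, LinearMap.smul_apply,
    LinearMap.sum_apply, smul_eq_mul] at hi
  exact eq_neg_of_add_eq_zero_left hi

theorem apply_rungeKutta_step_self {B : LinearMap.BilinForm R M} (hB : B.IsSymm) {F : M → M}
    (hF : ∀ y, B y (F y) = 0) {a : ι → ι → R} {b : ι → R}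
    (hsymp : ∀ i j, b i * a i j + b j * a j i - b i * b j = 0)
    (h : R) (y₀ : M) (Y : ι → M) (hY : ∀ i, Y i = y₀ + h • ∑ j, a i j • F (Y j)) :
    B (y₀ + h • ∑ i, b i • F (Y i)) (y₀ + h • ∑ i, b i • F (Y i)) = B y₀ y₀ := by
  set v := ∑ i, b i • F (Y i)
  have hcross : B y₀ v = -h * ∑ i, ∑ j, b i * a i j * B (F (Y j)) (F (Y i)) := by
    simp only [v, map_sum, map_smul, smul_eq_mul,
      apply_stage_eq_of_apply_self_eq_zero B hF a h y₀ Y hY, mul_sum, mul_neg, neg_mul,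
      sum_neg_distrib, neg_inj]
    refine sum_congr rfl fun i _ => sum_congr rfl fun j _ => ?_
    ring
  have hquad : B v v = ∑ i, ∑ j, b i * b j * B (F (Y i)) (F (Y j)) := by
    simp only [v, map_sum, map_smul, LinearMap.sum_apply, LinearMap.smul_apply, smul_eq_mul,
      mul_sum]
    rw [sum_comm]
    refine sum_congr rfl fun i _ => sum_congr rfl fun j _ => ?_
    ring
  rw [hB.apply_add_self, map_smul, LinearMap.map_smul₂, map_smul, hcross, hquad,
    sum_sum_mul_mul_eq_two_mul_of_symplectic hsymp fun i j => hB.eq _ _]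
  simp only [smul_eq_mul]
  ring

end LinearMap.BilinForm

open Matrix in
theorem symplectic_RK_preserves_quadratic_first_integral_general
    (n s : ℕ)
    (S : Matrix (Fin n) (Fin n) ℝ) (hS : S.IsSymm)
    (F : (Fin n → ℝ) → (Fin n → ℝ))
    (hF : ∀ y : Fin n → ℝ, y ⬝ᵥ S.mulVec (F y) = 0)
    (a : Fin s → Fin s → ℝ) (b : Fin s → ℝ)
    (hsymp : ∀ i j, b i * a i j + b j * a j i - b i * b j = 0)
    (h : ℝ) (y₀ : Fin n → ℝ) (Y : Fin s → (Fin n → ℝ))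
    (hY : ∀ i, Y i = y₀ + h • ∑ j, a i j • F (Y j))
    (y₁ : Fin n → ℝ)
    (hy₁ : y₁ = y₀ + h • ∑ i, b i • F (Y i)) :
    y₁ ⬝ᵥ S.mulVec y₁ = y₀ ⬝ᵥ S.mulVec y₀ := by
  simp only [← toBilin'_apply'] at hF ⊢
  subst hy₁
  exact LinearMap.BilinForm.apply_rungeKutta_step_self (isSymm_toBilin'_iff_isSymm.mpr hS) hF
    hsymp h y₀ Y hY

open Matrix in
theorem symplectic_RK_preserves_quadratic_first_integral
    (n s : ℕ) (hn : 0 < n) (hs : 0 < s)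
    (S : Matrix (Fin n) (Fin n) ℝ) (hS : S.IsSymm)
    (F : (Fin n → ℝ) → (Fin n → ℝ))
    (hF : ∀ y : Fin n → ℝ, y ⬝ᵥ S.mulVec (F y) = 0)
    (a : Fin s → Fin s → ℝ) (b : Fin s → ℝ)
    (hsymp : ∀ i j, b i * a i j + b j * a j i - b i * b j = 0)
    (h : ℝ) (y₀ : Fin n → ℝ) (Y : Fin s → (Fin n → ℝ))
    (hY : ∀ i, Y i = y₀ + h • ∑ j, a i j • F (Y j))
    (y₁ : Fin n → ℝ)
    (hy₁ : y₁ = y₀ + h • ∑ i, b i • F (Y i)) :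
    y₁ ⬝ᵥ S.mulVec y₁ = y₀ ⬝ᵥ S.mulVec y₀ :=
  symplectic_RK_preserves_quadratic_first_integral_general n s S hS F hF a b hsymp h y₀ Y hY y₁ hy₁
end

section
/- Let c₁, c₂ ∈ ℝ with c₁ ≠ c₂, c₁ ≠ 1/2, and c₂ ≠ 1/2. Define b₁ = (1/2 - c₂)/(c₁ - c₂), b₂ = (1/2 - c₁)/(c₂ - c₁), a₁₁ = (1/8 - c₂/3 - c₂/6 + c₂²/2)/(b₁·(c₁ - c₂)²), a₂₂ = (1/8 - c₁/3 - c₁/6 + c₁²/2)/(b₂·(c₂ - c₁)²), a₂₁ = (1/8 - c₂/3 - c₁/6 + c₁c₂/2)/(b₂·(c₂ - c₁)·(c₁ - c₂)), a₁₂ = (1/8 - c₁/3 - c₂/6 + c₁c₂/2)/(b₁·(c₁ - c₂)·(c₂ - c₁)). Then these coefficients satisfy b₁ + b₂ = 1, b₁c₁ + b₂c₂ = 1/2, and the symplecticity condition bᵢ·aᵢⱼ + bⱼ·aⱼᵢ - bᵢ·bⱼ = 0 for all i, j ∈ {1, 2}. -/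
set_option maxHeartbeats 1000000 in
theorem two_stage_symplectic_construction (c₁ c₂ : ℝ)
    (hne : c₁ ≠ c₂) (hc₁ : c₁ ≠ 1/2) (hc₂ : c₂ ≠ 1/2)
    (b₁ b₂ a₁₁ a₁₂ a₂₁ a₂₂ : ℝ)
    (hb₁ : b₁ = (1/2 - c₂) / (c₁ - c₂))
    (hb₂ : b₂ = (1/2 - c₁) / (c₂ - c₁))
    (ha₁₁ : a₁₁ = (1/8 - c₂/3 - c₂/6 + c₂^2/2) / (b₁ * (c₁ - c₂)^2))
    (ha₂₂ : a₂₂ = (1/8 - c₁/3 - c₁/6 + c₁^2/2) / (b₂ * (c₂ - c₁)^2))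
    (ha₂₁ : a₂₁ = (1/8 - c₂/3 - c₁/6 + c₁*c₂/2) / (b₂ * (c₂ - c₁) * (c₁ - c₂)))
    (ha₁₂ : a₁₂ = (1/8 - c₁/3 - c₂/6 + c₁*c₂/2) / (b₁ * (c₁ - c₂) * (c₂ - c₁))) :
    b₁ + b₂ = 1 ∧ b₁ * c₁ + b₂ * c₂ = 1/2 ∧
    (∀ i j : Fin 2,
      (![b₁, b₂]) i * (!![a₁₁, a₁₂; a₂₁, a₂₂]) i j
        + (![b₁, b₂]) j * (!![a₁₁, a₁₂; a₂₁, a₂₂]) j i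
        - (![b₁, b₂]) i * (![b₁, b₂]) j = 0) := by
  have hd : c₁ - c₂ ≠ 0 := sub_ne_zero.mpr hne
  have hd' : c₂ - c₁ ≠ 0 := sub_ne_zero.mpr (Ne.symm hne)
  have h1 : (1/2 : ℝ) - c₂ ≠ 0 := sub_ne_zero.mpr (Ne.symm hc₂)
  have h2 : (1/2 : ℝ) - c₁ ≠ 0 := sub_ne_zero.mpr (Ne.symm hc₁)
  have hb₁0 : b₁ ≠ 0 := by rw [hb₁]; exact div_ne_zero h1 hd
  have hb₂0 : b₂ ≠ 0 := by rw [hb₂]; exact div_ne_zero h2 hd'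
  have e11 : b₁ * a₁₁ + b₁ * a₁₁ - b₁ * b₁ = 0 := by
    rw [ha₁₁]
    field_simp
    rw [hb₁]; field_simp; ring
  have e22 : b₂ * a₂₂ + b₂ * a₂₂ - b₂ * b₂ = 0 := by
    rw [ha₂₂]
    field_simp
    rw [hb₂]; field_simp; ring
  have e12 : b₁ * a₁₂ + b₂ * a₂₁ - b₁ * b₂ = 0 := by
    rw [ha₁₂, ha₂₁]
    field_simp
    rw [hb₁, hb₂]; field_simp; ring
  refine ⟨?_, ?_, ?_⟩
  · rw [hb₁, hb₂]; field_simp; ring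
  · rw [hb₁, hb₂]; field_simp; ring
  · intro i j
    fin_cases i <;> fin_cases j <;>
      simp only [Matrix.cons_val_zero, Matrix.cons_val_one, Matrix.head_cons,
        Matrix.of_apply, Matrix.cons_val', Matrix.empty_val',
        Matrix.cons_val_fin_one, Fin.mk_zero, Fin.mk_one, Fin.isValue, Matrix.vecHead, Matrix.vecTail] <;>
      linarith [e11, e22, e12]
end
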